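/- Let I be a square-free monomial ideal of R = k[x_1,...,x_n] such that d = min{deg(u) : u ∈ G(I)} ≥ 2, where G(I) is the minimal monomial generating set of I. Then the arithmetical rank of I satisfies ara(I) ≤ n − d + 1. -/

import Mathlib

open MvPolynomial

namespace PaperDefs

variable {k : Type*} [Field k] {n : ℕ}

/-- The total degree of an exponent vector. -/
def edeg (a : Fin n →₀ ℕ) : ℕ := ∑ i, a i

/-- `I` is a monomial ideal: it is generated by a set of monomials. -/
def IsMonomialIdeal (I : Ideal (MvPolynomial (Fin n) k)) : Prop :=
  ∃ S : Set (Fin n →₀ ℕ),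
    I = Ideal.span ((fun a => (MvPolynomial.monomial a (1 : k))) '' S)

/-- The (exponent vectors of the) unique minimal monomial generating set `G(I)`:
monomials of `I` that are minimal with respect to divisibility. -/
def minGens (I : Ideal (MvPolynomial (Fin n) k)) : Set (Fin n →₀ ℕ) :=
  {a | (MvPolynomial.monomial a (1 : k)) ∈ I ∧
    ∀ b : Fin n →₀ ℕ, b < a → (MvPolynomial.monomial b (1 : k)) ∉ I}

/-- A squarefree exponent vector. -/
def SqFree (a : Fin n →₀ ℕ) : Prop := ∀ i, a i ≤ 1

/-- `I` is a polymatroidal ideal of degree `d`. -/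
def IsPolymatroidal (I : Ideal (MvPolynomial (Fin n) k)) (d : ℕ) : Prop :=
  IsMonomialIdeal I ∧ I ≠ ⊥ ∧
  (∀ a ∈ minGens I, edeg a = d) ∧
  ∀ a ∈ minGens I, ∀ b ∈ minGens I, ∀ i : Fin n, b i < a i →
    ∃ j : Fin n, a j < b j ∧
      (MvPolynomial.monomial (a - Finsupp.single i 1 + Finsupp.single j 1) (1 : k)) ∈ I

/-- `I` is a matroidal ideal of degree `d`: a squarefree polymatroidal ideal. -/
def IsMatroidal (I : Ideal (MvPolynomial (Fin n) k)) (d : ℕ) : Prop :=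
  IsPolymatroidal I d ∧ ∀ a ∈ minGens I, SqFree a

/-- `I` is full-supported: every variable divides some minimal generator. -/
def FullSupported (I : Ideal (MvPolynomial (Fin n) k)) : Prop :=
  ∀ i : Fin n, ∃ a ∈ minGens I, a i ≠ 0

/-- The maximal graded ideal `(x_1, ..., x_n)`. -/
noncomputable def varIdeal (k : Type*) [Field k] (n : ℕ) : Ideal (MvPolynomial (Fin n) k) :=
  Ideal.span (Set.range MvPolynomial.X)

/-- The colon ideal `(I : x_i)`. -/
noncomputable def colonVar (I : Ideal (MvPolynomial (Fin n) k)) (i : Fin n) :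
    Ideal (MvPolynomial (Fin n) k) :=
  I.colon ((Ideal.span {MvPolynomial.X i} : Ideal (MvPolynomial (Fin n) k)) : Set (MvPolynomial (Fin n) k))

/-- The height of an ideal: the infimum of `Order.height` over the primes containing it. -/
noncomputable def ht {R : Type*} [CommRing R] (I : Ideal R) : ℕ∞ :=
  ⨅ (p : PrimeSpectrum R) (_ : I ≤ p.asIdeal), Order.height p

/-- `I` is unmixed: all associated primes of `R/I` have the same height. -/
def IsUnmixed (I : Ideal (MvPolynomial (Fin n) k)) : Prop :=
  ∀ p ∈ associatedPrimes (MvPolynomial (Fin n) k) (MvPolynomial (Fin n) k ⧸ I),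
    ∀ q ∈ associatedPrimes (MvPolynomial (Fin n) k) (MvPolynomial (Fin n) k ⧸ I),
      ht p = ht q

/-- The arithmetical rank of `I`. -/
noncomputable def ara (I : Ideal (MvPolynomial (Fin n) k)) : ℕ :=
  sInf {t : ℕ | ∃ f : Fin t → MvPolynomial (Fin n) k,
    (Ideal.span (Set.range f)).radical = I.radical}

/-- The squarefree Veronese ideal of degree `d`. -/
noncomputable def sqfreeVeronese (k : Type*) [Field k] (n d : ℕ) : Ideal (MvPolynomial (Fin n) k) :=
  Ideal.span ((fun s : Finset (Fin n) => ∏ i ∈ s, MvPolynomial.X i) ''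
    {s : Finset (Fin n) | s.card = d})

/-- The depth of `R/I` : the supremum of lengths of `R/I`-regular sequences consisting of
elements of the maximal graded ideal. -/
noncomputable def quotDepth (I : Ideal (MvPolynomial (Fin n) k)) : ℕ :=
  sSup {r : ℕ | ∃ rs : List (MvPolynomial (Fin n) k), rs.length = r ∧
    (∀ x ∈ rs, x ∈ varIdeal k n) ∧
    RingTheory.Sequence.IsRegular (MvPolynomial (Fin n) k ⧸ I) rs}

/-- `R/I` is Cohen–Macaulay: the depth of `R/I` equals its Krull dimension. -/
def IsCohenMacaulayQuot (I : Ideal (MvPolynomial (Fin n) k)) : Prop :=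
  (quotDepth I : WithBot ℕ∞) = ringKrullDim (MvPolynomial (Fin n) k ⧸ I)

end PaperDefs

/-!
Schmitt–Vogel: let `q_i` be the sum of the squarefree monomials of degree `n - i` lying in `√I`,
for `0 ≤ i ≤ n - d`. Every monomial of `I` is divisible by a squarefree minimal generator, so its
support has at least `d` elements, and `√I` is generated by squarefree monomials `x_s ∈ √I` with
`#s ≥ d`. Each of these lies in `√(q_0, …, q_{n-d})` by downward induction on `#s`:
`x_s ^ 2 = x_s * q_{n - #s} - ∑_{t ≠ s} x_s * x_t`, and `x_s * x_t` is a multiple of `x_{s ∪ t}`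
with `#(s ∪ t) > #s`.
-/

open Finset

theorem Finset.ssubset_union_of_card_eq {α : Type*} [DecidableEq α] {s t : Finset α}
    (hts : t ≠ s) (hcard : #t = #s) : s ⊂ s ∪ t :=
  left_lt_sup.2 fun hsub => hts (eq_of_subset_of_card_le hsub hcard.ge)

section SchmittVogel

variable {R ι : Type*} [CommRing R] [Fintype ι]

open Classical in
noncomputable def esymmIn (K : Ideal R) (x : ι → R) (m : ℕ) : R :=
  ∑ s ∈ (powersetCard m univ).filter (fun s => ∏ j ∈ s, x j ∈ K), ∏ j ∈ s, x j

theorem esymmIn_mem (K : Ideal R) (x : ι → R) (m : ℕ) : esymmIn K x m ∈ K := by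
  classical
  exact K.sum_mem fun s hs => (mem_filter.1 hs).2

theorem prod_mem_radical_of_esymmIn_mem {K J : Ideal R} {x : ι → R} {d : ℕ}
    (hJ : ∀ m, d ≤ m → m ≤ Fintype.card ι → esymmIn K x m ∈ J) {s : Finset ι}
    (hs : ∏ j ∈ s, x j ∈ K) (hds : d ≤ #s) : ∏ j ∈ s, x j ∈ J.radical := by
  classical
  refine strongDownwardInduction (n := Fintype.card ι)
    (p := fun s => ∏ j ∈ s, x j ∈ K → d ≤ #s → ∏ j ∈ s, x j ∈ J.radical)
    (fun s ih _ hs hds => ?_) s (card_le_univ s) hs hds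
  set F := (powersetCard #s univ).filter (fun t => ∏ j ∈ t, x j ∈ K)
  have hsF : s ∈ F := mem_filter.2 ⟨mem_powersetCard.2 ⟨subset_univ s, rfl⟩, hs⟩
  have hcross : ∀ t ∈ F.erase s, (∏ j ∈ s, x j) * ∏ j ∈ t, x j ∈ J.radical := by
    intro t ht
    obtain ⟨hts, htF⟩ := mem_erase.1 ht
    obtain ⟨-, htcard⟩ := mem_powersetCard.1 (mem_filter.1 htF).1
    have hunion : ∏ j ∈ s ∪ t, x j ∈ J.radical := by
      refine ih (card_le_univ _) (ssubset_union_of_card_eq hts htcard) ?_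
        (hds.trans (card_le_card subset_union_left))
      exact K.mem_of_dvd (prod_dvd_prod_of_subset _ _ _ subset_union_left) hs
    rw [← prod_union_inter]
    exact J.radical.mul_mem_right _ hunion
  have hsum : ∑ t ∈ F, (∏ j ∈ s, x j) * ∏ j ∈ t, x j ∈ J.radical := by
    rw [← mul_sum]
    exact J.radical.mul_mem_left _ (J.le_radical (hJ _ hds (card_le_univ s)))
  rw [← add_sum_erase _ _ hsF, J.radical.add_mem_iff_left (J.radical.sum_mem hcross),
    ← pow_two] at hsum
  exact Ideal.mem_radical_of_pow_mem hsum

end SchmittVogel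

namespace MvPolynomial

variable {σ R : Type*} [CommSemiring R]

theorem monomial_one_eq_prod_X_pow (a : σ →₀ ℕ) :
    monomial a (1 : R) = ∏ i ∈ a.support, X i ^ a i := by
  rw [monomial_eq, C_1, one_mul, Finsupp.prod]

theorem monomial_one_mem_radical_iff {J : Ideal (MvPolynomial σ R)} {a : σ →₀ ℕ} :
    monomial a 1 ∈ J.radical ↔ ∏ i ∈ a.support, X i ∈ J.radical := by
  rw [monomial_one_eq_prod_X_pow]
  constructor
  · intro h
    refine Ideal.mem_radical_of_pow_mem (m := a.degree) (J.radical.mem_of_dvd ?_ h)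
    rw [← prod_pow]
    exact prod_dvd_prod_of_dvd _ _ fun i _ => pow_dvd_pow _ (Finsupp.le_degree i a)
  · refine J.radical.mem_of_dvd (prod_dvd_prod_of_dvd _ _ fun i hi => ?_)
    exact dvd_pow_self _ (Finsupp.mem_support_iff.1 hi)

end MvPolynomial

namespace PaperDefs

variable {k : Type*} [Field k] {n : ℕ}

theorem exists_mem_minGens_le {I : Ideal (MvPolynomial (Fin n) k)} {a : Fin n →₀ ℕ}
    (ha : monomial a 1 ∈ I) : ∃ c ∈ minGens I, c ≤ a := by
  induction a using WellFoundedLT.induction with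
  | _ a ih =>
  by_cases hmin : ∀ b < a, monomial b (1 : k) ∉ I
  · exact ⟨a, ⟨ha, hmin⟩, le_rfl⟩
  · push Not at hmin
    obtain ⟨b, hba, hb⟩ := hmin
    obtain ⟨c, hc, hcb⟩ := ih b hba hb
    exact ⟨c, hc, hcb.trans hba.le⟩

theorem edeg_eq_card_support {c : Fin n →₀ ℕ} (hc : SqFree c) : edeg c = #c.support := by
  rw [edeg, ← Finsupp.degree_eq_sum, Finsupp.degree_apply, card_eq_sum_ones]
  exact sum_congr rfl fun i hi =>
    le_antisymm (hc i) (Nat.one_le_iff_ne_zero.2 (Finsupp.mem_support_iff.1 hi))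

theorem le_card_support_of_monomial_mem {I : Ideal (MvPolynomial (Fin n) k)} {d : ℕ}
    (hsf : ∀ a ∈ minGens I, SqFree a) (hdle : ∀ a ∈ minGens I, d ≤ edeg a)
    {a : Fin n →₀ ℕ} (ha : monomial a 1 ∈ I) : d ≤ #a.support := by
  obtain ⟨c, hc, hca⟩ := exists_mem_minGens_le ha
  calc d ≤ edeg c := hdle c hc
    _ = #c.support := edeg_eq_card_support (hsf c hc)
    _ ≤ #a.support := card_le_card (Finsupp.support_mono hca)

end PaperDefs

open PaperDefs in
theorem statement11_general {k : Type*} [Field k] {n d : ℕ}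
    (I : Ideal (MvPolynomial (Fin n) k))
    (hmono : IsMonomialIdeal I) (hsf : ∀ a ∈ minGens I, SqFree a)
    (hdle : ∀ a ∈ minGens I, d ≤ edeg a) :
    ara I ≤ n - d + 1 := by
  let f : Fin (n - d + 1) → MvPolynomial (Fin n) k := fun i => esymmIn I.radical X (n - i)
  have hf : ∀ m, d ≤ m → m ≤ n → esymmIn I.radical X m ∈ Ideal.span (Set.range f) :=
    fun m hdm hmn => Ideal.subset_span ⟨⟨n - m, by omega⟩, by simp only [f]; congr; omega⟩
  refine Nat.sInf_le ⟨f, le_antisymm ?_ ?_⟩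
  · rw [Ideal.radical_le_radical_iff, Ideal.span_le]
    rintro _ ⟨i, rfl⟩
    exact esymmIn_mem _ _ _
  · obtain ⟨S, hS⟩ := hmono
    rw [Ideal.radical_le_radical_iff, hS, Ideal.span_le]
    rintro _ ⟨a, haS, rfl⟩
    have haI : monomial a 1 ∈ I := hS ▸ Ideal.subset_span ⟨a, haS, rfl⟩
    refine monomial_one_mem_radical_iff.2 <| prod_mem_radical_of_esymmIn_mem
      (fun m hdm hmn => hf m hdm (Fintype.card_fin n ▸ hmn)) ?_
      (le_card_support_of_monomial_mem hsf hdle haI)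
    exact monomial_one_mem_radical_iff.1 (I.le_radical haI)

open PaperDefs in
/-- Lemma 2.2. Let `I` be a squarefree monomial ideal with
`d = min{deg u : u ∈ G(I)} ≥ 2`. Then `ara(I) ≤ n - d + 1`. -/
theorem statement11 {k : Type*} [Field k] {n d : ℕ}
    (I : Ideal (MvPolynomial (Fin n) k))
    (hmono : IsMonomialIdeal I) (hsf : ∀ a ∈ minGens I, SqFree a)
    (hd2 : 2 ≤ d)
    (hdle : ∀ a ∈ minGens I, d ≤ edeg a)
    (hdeq : ∃ a ∈ minGens I, edeg a = d) :
    ara I ≤ n - d + 1 :=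
  statement11_general I hmono hsf hdle
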